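/- arXiv:1109.6344 — 2 statements merged into one kernel-verified Lean document; each statement's English description precedes it below -/
import Mathlib

section
/- A revision operator ∗ satisfying RAGM satisfies postulate (D) (for all ≤ and all nonempty A, B ⊆ V: if A ⇝ B with respect to ≤ then min(B, ≤ ∗ A) ∩ A = ∅) if and only if it satisfies postulate (DR) (for all ≤, all nonempty A, all v ∉ A and w ∈ A with w ∉ min(A, ≤): if v < w then v < w in ≤ ∗ A). -/
open Set

variable {V : Type*}

/-- A total preorder: reflexive, transitive and total. -/
def IsTP (r : V → V → Prop) : Prop :=
  Reflexive r ∧ Transitive r ∧ ∀ v w, r v w ∨ r w v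

/-- The strict part of a relation: v < w iff v ≤ w and not w ≤ v. -/
def SRel (r : V → V → Prop) (v w : V) : Prop := r v w ∧ ¬ r w v

/-- min(A, ≤) = the ≤-minimal elements of A. -/
def mins (r : V → V → Prop) (A : Set V) : Set V :=
  {v | v ∈ A ∧ ∀ w ∈ A, r v w}

/-- A and B counteract with respect to r. -/
def Counter (r : V → V → Prop) (A B : Set V) : Prop :=
  mins r A ∩ B = ∅ ∧ mins r B ∩ A = ∅

/-- The restrained revision operator. -/
def restrained (r : V → V → Prop) (A : Set V) : V → V → Prop :=
  fun v w => v ∈ mins r A ∨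
    (w ∉ mins r A ∧ (SRel r v w ∨ (r v w ∧ (v ∈ A ∨ w ∉ A))))

lemma mins_nonempty' [Fintype V] {r : V → V → Prop} (htp : IsTP r)
    {A : Set V} (hA : A.Nonempty) : (mins r A).Nonempty := by
  classical
  obtain ⟨hr, ht, hto⟩ := htp
  have key : ∀ s : Finset V, s.Nonempty → ∃ m ∈ s, ∀ x ∈ s, r m x := by
    intro s
    induction s using Finset.induction with
    | empty => intro h; exact absurd h (by simp)
    | @insert a s ha ih =>
      intro _
      by_cases hsne : s.Nonempty
      · obtain ⟨m, hmA, hmin⟩ := ih hsne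
        rcases hto m a with h | h
        · refine ⟨m, Finset.mem_insert_of_mem hmA, fun x hx => ?_⟩
          rcases Finset.mem_insert.mp hx with rfl | hx
          · exact h
          · exact hmin x hx
        · refine ⟨a, Finset.mem_insert_self _ _, fun x hx => ?_⟩
          rcases Finset.mem_insert.mp hx with rfl | hx
          · exact hr _
          · exact ht h (hmin x hx)
      · rw [Finset.not_nonempty_iff_eq_empty] at hsne
        subst hsne
        refine ⟨a, Finset.mem_insert_self _ _, fun x hx => ?_⟩
        rcases Finset.mem_insert.mp hx with rfl | hx
        · exact hr _
        · simp at hx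
  have hAf : A.Finite := A.toFinite
  obtain ⟨m, hm, hmin⟩ := key hAf.toFinset (by rwa [Set.Finite.toFinset_nonempty])
  exact ⟨m, (Set.Finite.mem_toFinset hAf).mp hm,
    fun x hx => hmin x ((Set.Finite.mem_toFinset hAf).mpr hx)⟩

theorem stmt_5 [Fintype V] [Nonempty V]
    (op : (V → V → Prop) → Set V → (V → V → Prop))
    (htp : ∀ r (A : Set V), IsTP r → A.Nonempty → IsTP (op r A))
    (hragm : ∀ r (A : Set V), IsTP r → A.Nonempty →
      mins (op r A) Set.univ = mins r A) :
    ((∀ r (A B : Set V), IsTP r → A.Nonempty → B.Nonempty →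
        Counter r A B → mins (op r A) B ∩ A = ∅)
      ↔
     (∀ r (A : Set V), IsTP r → A.Nonempty →
        ∀ v ∉ A, ∀ w ∈ A, w ∉ mins r A → SRel r v w → SRel (op r A) v w)) := by
  constructor
  · -- (D) → (DR)
    intro hD r A htpr hA v hv w hw hwmin hsvw
    obtain ⟨hop_r, hop_t, hop_to⟩ := htp r A htpr hA
    set B : Set V := ({v, w} : Set V) with hBdef
    have hB : B.Nonempty := ⟨v, Or.inl rfl⟩
    have hcnt : Counter r A B := by
      constructor
      · rw [Set.eq_empty_iff_forall_notMem]
        rintro x ⟨hxm, hxB⟩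
        rcases hxB with rfl | rfl
        · exact hv hxm.1
        · exact hwmin hxm
      · rw [Set.eq_empty_iff_forall_notMem]
        rintro x ⟨hxm, hxA⟩
        rcases hxm.1 with rfl | rfl
        · exact hv hxA
        · exact hsvw.2 (hxm.2 v (Or.inl rfl))
    have hD' := hD r A B htpr hA hB hcnt
    have hnwv : ¬ op r A w v := by
      intro h
      have hwmem : w ∈ mins (op r A) B ∩ A := by
        refine ⟨⟨Or.inr rfl, fun x hx => ?_⟩, hw⟩
        rcases hx with rfl | rfl
        · exact h
        · exact hop_r _
      rw [hD'] at hwmem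
      exact hwmem
    have hvw : op r A v w := (hop_to v w).resolve_right (fun h => hnwv h)
    exact ⟨hvw, hnwv⟩
  · -- (DR) → (D)
    intro hDR r A B htpr hA hB hcnt
    rw [Set.eq_empty_iff_forall_notMem]
    rintro w ⟨hwmin, hwA⟩
    have hwB : w ∈ B := hwmin.1
    have hwnotminA : w ∉ mins r A := fun h =>
      (Set.eq_empty_iff_forall_notMem.mp hcnt.1 w) ⟨h, hwB⟩
    obtain ⟨v, hvB, hvmin⟩ := mins_nonempty' htpr hB
    have hvnA : v ∉ A := fun h =>
      (Set.eq_empty_iff_forall_notMem.mp hcnt.2 v) ⟨⟨hvB, hvmin⟩, h⟩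
    have hwnotminB : w ∉ mins r B := fun h =>
      (Set.eq_empty_iff_forall_notMem.mp hcnt.2 w) ⟨h, hwA⟩
    have hsrvw : SRel r v w :=
      ⟨hvmin w hwB, fun h => hwnotminB ⟨hwB, fun x hx => htpr.2.1 h (hvmin x hx)⟩⟩
    exact (hDR r A htpr hA v hvnA w hwA hwnotminA hsrvw).2 (hwmin.2 v hvB)
end

section
/- Given RAGM, a revision operator ∗ satisfies both (C2) (for all ≤ and all nonempty B with B ∩ A = ∅: min(B, ≤ ∗ A) = min(B, ≤)) and (D) (if A ⇝ B with respect to ≤ then min(B, ≤ ∗ A) ∩ A = ∅) if and only if it satisfies the single rule (C2D): for all ≤ and all nonempty A, B ⊆ V, if A ⇝ B with respect to ≤ then min(B, ≤ ∗ A) = min(B, ≤). -/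
open Set

variable {V : Type*}

lemma exists_min_finset {V : Type*} (r : V → V → Prop) (h : IsTP r) :
    ∀ (s : Finset V), s.Nonempty → ∃ v ∈ s, ∀ w ∈ s, r v w := by
  classical
  intro s
  induction s using Finset.induction_on with
  | empty => intro hs; simp at hs
  | @insert a s ha ih =>
    intro _
    rcases s.eq_empty_or_nonempty with rfl | hs
    · exact ⟨a, by simp, by simp [h.1 a]⟩
    · obtain ⟨v, hv, hmin⟩ := ih hs
      rcases h.2.2 v a with hva | hav
      · exact ⟨v, Finset.mem_insert_of_mem hv, by
          intro w hw
          rcases Finset.mem_insert.1 hw with rfl | hw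
          · exact hva
          · exact hmin w hw⟩
      · exact ⟨a, Finset.mem_insert_self a s, by
          intro w hw
          rcases Finset.mem_insert.1 hw with rfl | hw
          · exact h.1 _
          · exact h.2.1 hav (hmin w hw)⟩

lemma mins_nonempty {V : Type*} [Fintype V] (r : V → V → Prop) (h : IsTP r)
    {B : Set V} (hB : B.Nonempty) : (mins r B).Nonempty := by
  classical
  obtain ⟨v, hv, hmin⟩ := exists_min_finset r h B.toFinset (by
    simpa [Set.toFinset_nonempty] using hB)
  exact ⟨v, Set.mem_toFinset.1 hv, fun w hw => hmin w (Set.mem_toFinset.2 hw)⟩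

lemma mins_subset_eq {V : Type*} (r : V → V → Prop) (h : IsTP r)
    {B B' : Set V} (hsub : B' ⊆ B) (hmins : mins r B ⊆ B')
    (hne : (mins r B).Nonempty) : mins r B' = mins r B := by
  ext v
  constructor
  · rintro ⟨hvB', hv⟩
    obtain ⟨u, huB, humin⟩ := hne
    exact ⟨hsub hvB', fun w hw => h.2.1 (hv u (hmins ⟨huB, humin⟩)) (humin w hw)⟩
  · rintro ⟨hvB, hv⟩
    exact ⟨hmins ⟨hvB, hv⟩, fun w hw => hv w (hsub hw)⟩

theorem stmt_12 [Fintype V] [Nonempty V]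
    (op : (V → V → Prop) → Set V → (V → V → Prop))
    (htp : ∀ r (A : Set V), IsTP r → A.Nonempty → IsTP (op r A))
    (hragm : ∀ r (A : Set V), IsTP r → A.Nonempty →
      mins (op r A) Set.univ = mins r A) :
    (((∀ r (A B : Set V), IsTP r → A.Nonempty → B.Nonempty → B ∩ A = ∅ →
        mins (op r A) B = mins r B) ∧
      (∀ r (A B : Set V), IsTP r → A.Nonempty → B.Nonempty →
        Counter r A B → mins (op r A) B ∩ A = ∅))
      ↔
     (∀ r (A B : Set V), IsTP r → A.Nonempty → B.Nonempty →
        Counter r A B → mins (op r A) B = mins r B)) := by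
  constructor
  · rintro ⟨hC2, hD⟩ r A B htpr hA hB hcnt
    have hdisj : mins r B ∩ A = ∅ := hcnt.2
    set B' : Set V := B \ A with hB'
    have hsub : B' ⊆ B := Set.diff_subset
    have hrne : (mins r B).Nonempty := mins_nonempty r htpr hB
    have hrsub : mins r B ⊆ B' := by
      rintro v ⟨hvB, hv⟩
      rw [hB']
      exact ⟨hvB, fun hvA => absurd (Set.mem_inter (show v ∈ mins r B from ⟨hvB, hv⟩) hvA) (by simp [hdisj])⟩
    have hB'ne : B'.Nonempty := hrne.mono hrsub
    have hops : IsTP (op r A) := htp r A htpr hA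
    have hone : (mins (op r A) B).Nonempty := mins_nonempty _ hops hB
    have hosub : mins (op r A) B ⊆ B' := by
      have hd := hD r A B htpr hA hB hcnt
      rintro v hv
      rw [hB']
      exact ⟨hv.1, fun hvA => absurd (Set.mem_inter hv hvA) (by simp [hd])⟩
    have hB'disj : B' ∩ A = ∅ := by
      ext x; simp [hB']
    calc mins (op r A) B = mins (op r A) B' :=
          (mins_subset_eq _ hops hsub hosub hone).symm
      _ = mins r B' := hC2 r A B' htpr hA hB'ne hB'disj
      _ = mins r B := mins_subset_eq _ htpr hsub hrsub hrne
  · intro hC2D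
    constructor
    · intro r A B htpr hA hB hdisj
      refine hC2D r A B htpr hA hB ⟨?_, ?_⟩
      · apply Set.eq_empty_of_forall_notMem
        rintro v ⟨⟨hvA, _⟩, hvB⟩
        exact absurd (Set.mem_inter hvB hvA) (by simp [hdisj])
      · apply Set.eq_empty_of_forall_notMem
        rintro v ⟨⟨hvB, _⟩, hvA⟩
        exact absurd (Set.mem_inter hvB hvA) (by simp [hdisj])
    · intro r A B htpr hA hB hcnt
      rw [hC2D r A B htpr hA hB hcnt]
      exact hcnt.2
end
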